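/- Let N ≥ 1 and let x, y ∈ V_N ∖ ∂_v^int V_N. For a configuration ω ∈ {0,1}^{E_N}, the following are equivalent: (i) there exists an open cluster A (a connected component of the graph (V_N, {e ∈ E_N : ω(e)=1})) with {x,y} ⊆ V_A and V_A ∩ ∂_v^int V_N = ∅; (ii) x and y are joined by a path of open edges of E_N, and the set C(ω) = {e ∈ E_N : ω(e)=0} of closed edges contains a contour γ surrounding {x,y}. -/

import Mathlib

open MeasureTheory Filter

/-- An edge of the square lattice `ℤ × ℤ`, encoded by its lower-left endpoint `base`
together with its direction: a horizontal edge joins `base` to `base + (1,0)`,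
a vertical edge joins `base` to `base + (0,1)`. This encodes exactly the set
`𝔼` of nearest-neighbour edges of `ℤ²`. -/
structure LatticeEdge where
  base : ℤ × ℤ
  horiz : Bool
deriving DecidableEq

namespace LatticeEdge

/-- First endpoint of an edge. -/
def fst (e : LatticeEdge) : ℤ × ℤ := e.base

/-- Second endpoint of an edge. -/
def snd (e : LatticeEdge) : ℤ × ℤ :=
  if e.horiz then (e.base.1 + 1, e.base.2) else (e.base.1, e.base.2 + 1)

/-- The two endpoints of an edge, as an unordered pair. -/
def ends (e : LatticeEdge) : Sym2 (ℤ × ℤ) := s(e.fst, e.snd)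

end LatticeEdge

/-- The graph on `ℤ²` whose edges are the lattice edges belonging to `S`. -/
def graphOf (S : Set LatticeEdge) : SimpleGraph (ℤ × ℤ) where
  Adj u v := u ≠ v ∧ ∃ e ∈ S, e.ends = s(u, v)
  symm := by
    constructor
    intro u v h
    obtain ⟨hne, e, he, hs⟩ := h
    exact ⟨hne.symm, e, he, hs.trans (Sym2.eq_swap)⟩
  loopless := by
    constructor
    intro u h
    exact h.1 rfl

/-- The graph `(ℤ², 𝔼 ∖ γ)` obtained by deleting the edges of `γ`. -/
def complGraph (γ : Finset LatticeEdge) : SimpleGraph (ℤ × ℤ) :=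
  graphOf {e | e ∉ γ}

/-- A finite set `γ` of lattice edges is a *contour* if the graph `(ℤ², 𝔼 ∖ γ)` has
exactly one finite connected component, and `γ` is minimal with this property:
for every `e ∈ γ`, the graph `(ℤ², 𝔼 ∖ (γ ∖ {e}))` has no finite connected component. -/
def IsContour (γ : Finset LatticeEdge) : Prop :=
  (∃! C : (complGraph γ).ConnectedComponent, C.supp.Finite) ∧
  ∀ e ∈ γ, ∀ C : (graphOf {f | f ∉ γ ∨ f = e}).ConnectedComponent, ¬ C.supp.Finite

/-- A contour `γ` *surrounds* a set `X ⊆ ℤ²` of vertices if `X` is contained in the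
vertex set `I_γ` of the (unique) finite connected component of `(ℤ², 𝔼 ∖ γ)`. -/
def Surrounds (γ : Finset LatticeEdge) (X : Set (ℤ × ℤ)) : Prop :=
  IsContour γ ∧ ∃ C : (complGraph γ).ConnectedComponent, C.supp.Finite ∧ X ⊆ C.supp

/-- `Γ^n_X` : the set of contours of cardinality `n` surrounding `X`. -/
def GammaN (X : Set (ℤ × ℤ)) (n : ℕ) : Set (Finset LatticeEdge) :=
  {γ | Surrounds γ X ∧ γ.card = n}

/-- `‖x‖ = 2(x₁ + x₂ + 2)`, the cardinality of a minimal contour surrounding `{0, x}`. -/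
def normC (x : ℤ × ℤ) : ℕ := (2 * (x.1 + x.2 + 2)).toNat

/-- `β_x` : the number of minimal contours surrounding `{0, x}`. -/
noncomputable def betaX (x : ℤ × ℤ) : ℕ := Nat.card ↥(GammaN {0, x} (normC x))

/-- Number of horizontal edges of `γ`, i.e. `|γ ∩ 𝔼ʰ|`. -/
def hCount (γ : Finset LatticeEdge) : ℕ := (γ.filter fun e => e.horiz = true).card

/-- Number of vertical edges of `γ`, i.e. `|γ ∩ 𝔼ᵛ|`. -/
def vCount (γ : Finset LatticeEdge) : ℕ := (γ.filter fun e => e.horiz = false).card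

/-- The dual edge `e*` of a lattice edge `e`.  We identify the dual lattice
`ℤ² + (1/2, 1/2)` with `ℤ²` via `(a,b) ↦ (a + 1/2, b + 1/2)`; under this
identification the dual edge crossing the horizontal edge `(a,b)–(a+1,b)` joins
`(a, b-1)` to `(a, b)` (a vertical dual edge), and the dual edge crossing the
vertical edge `(a,b)–(a,b+1)` joins `(a-1, b)` to `(a, b)` (a horizontal dual edge). -/
def dualEdge (e : LatticeEdge) : LatticeEdge :=
  if e.horiz then ⟨(e.base.1, e.base.2 - 1), false⟩ else ⟨(e.base.1 - 1, e.base.2), true⟩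

/-- A finite set `S` of (dual) lattice edges is a *circuit* if it is the edge set of a
closed self-avoiding path: there are `n ≥ 3` distinct vertices `c 0, …, c (n-1)`,
cyclically consecutive ones being joined by an edge of `S`, and every edge of `S` arising
this way. -/
def IsCircuit (S : Finset LatticeEdge) : Prop :=
  ∃ n : ℕ, 3 ≤ n ∧ ∃ c : ZMod n → ℤ × ℤ, Function.Injective c ∧
    (∀ i : ZMod n, ∃ e ∈ S, e.ends = s(c i, c (i + 1))) ∧
    (∀ e ∈ S, ∃ i : ZMod n, e.ends = s(c i, c (i + 1)))

/-- The dual edge `e_k*` joining `(k - 1/2, -1/2)` to `(k - 1/2, 1/2)`; in our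
identification of the dual lattice with `ℤ²` this is the vertical dual edge with base
`(k-1, -1)`, i.e. the dual of the horizontal edge `(k-1, 0)–(k, 0)`. -/
def ekStar (k : ℤ) : LatticeEdge := ⟨(k - 1, -1), false⟩

/-- The probability that the edge `e` is open: `p_h` for horizontal edges and `p_v`
for vertical ones. -/
noncomputable def edgeProb (ph pv : ℝ) (e : LatticeEdge) : ℝ := if e.horiz then ph else pv

/-- `P` is the Bernoulli product measure `P_{(p_h, p_v)}` on configurations
`ω ∈ {0,1}^𝔼` (encoded as `LatticeEdge → Bool`, `true` = open): it is a probability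
measure and, for every finite set of edges, the states of those edges are independent
Bernoulli variables with the correct parameters.  These cylinder probabilities
characterize the product measure uniquely. -/
def IsBernoulliProduct (ph pv : ℝ) (P : Measure (LatticeEdge → Bool)) : Prop :=
  IsProbabilityMeasure P ∧
    ∀ (F : Finset LatticeEdge) (σ : LatticeEdge → Bool),
      P {ω | ∀ e ∈ F, ω e = σ e} =
        ∏ e ∈ F, ENNReal.ofReal
          (if σ e then edgeProb ph pv e else 1 - edgeProb ph pv e)

/-- The graph of open edges of the configuration `ω`. -/
def openGraph (ω : LatticeEdge → Bool) : SimpleGraph (ℤ × ℤ) :=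
  graphOf {e | ω e = true}

/-- `x` and `y` belong to the same finite open cluster of the configuration `ω`. -/
def SameFiniteCluster (ω : LatticeEdge → Bool) (x y : ℤ × ℤ) : Prop :=
  ∃ C : (openGraph ω).ConnectedComponent, x ∈ C.supp ∧ y ∈ C.supp ∧ C.supp.Finite

/-- The truncated (finite) connectivity `τ^f_p(x,y)`: the probability that `x` and `y`
belong to the same finite open cluster. -/
noncomputable def tauF (P : Measure (LatticeEdge → Bool)) (x y : ℤ × ℤ) : ℝ :=
  (P {ω | SameFiniteCluster ω x y}).toReal

/-- The box `V_N = ([-N,N] × [-N,N]) ∩ ℤ²`. -/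
def VN (N : ℕ) : Set (ℤ × ℤ) := {v | |v.1| ≤ (N : ℤ) ∧ |v.2| ≤ (N : ℤ)}

/-- The interior vertex boundary `∂_v^int V_N = {x ∈ V_N : d(x, ℤ² ∖ V_N) = 1}`. -/
def intBdry (N : ℕ) : Set (ℤ × ℤ) :=
  {v | (|v.1| ≤ (N : ℤ) ∧ |v.2| ≤ (N : ℤ)) ∧ (|v.1| = (N : ℤ) ∨ |v.2| = (N : ℤ))}

/-- `e ∈ E_N`: both endpoints of `e` lie in `V_N`. -/
def edgeInBox (N : ℕ) (e : LatticeEdge) : Prop := e.fst ∈ VN N ∧ e.snd ∈ VN N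

/-- The graph on `(V_N, open edges of E_N)` (vertices outside `V_N` are isolated). -/
def openGraphN (N : ℕ) (ω : LatticeEdge → Bool) : SimpleGraph (ℤ × ℤ) :=
  graphOf {e | edgeInBox N e ∧ ω e = true}

/-- The finite-volume event defining `τ^{f,N}_p(x,y)`: there is an open cluster `A` of
`(V_N, open edges of E_N)` with `{x,y} ⊆ V_A` and `V_A ∩ ∂_v^int V_N = ∅`. -/
def FiniteVolEvent (N : ℕ) (x y : ℤ × ℤ) (ω : LatticeEdge → Bool) : Prop :=
  ∃ C : (openGraphN N ω).ConnectedComponent,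
    x ∈ C.supp ∧ y ∈ C.supp ∧ C.supp ∩ intBdry N = ∅

/-- The finite-volume finite connectivity `τ^{f,N}_p(x,y)`. -/
noncomputable def tauFN (P : Measure (LatticeEdge → Bool)) (N : ℕ) (x y : ℤ × ℤ) : ℝ :=
  (P {ω | FiniteVolEvent N x y ω}).toReal

/-- `λ = (1-p)/p`. -/
noncomputable def lam (p : ℝ) : ℝ := (1 - p) / p

/-- The threshold `η̃(p_h, x₁, x₂)` from the paper. -/
noncomputable def etaTilde (ph : ℝ) (x1 x2 : ℤ) : ℝ :=
  ((betaX (x1, x2) : ℝ) * ph ^ (4 * (x1 + x2 + 2)) /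
      ((4 ^ 3 * lam ph) ^ (x1 + x2 + 3) / (1 - 4 ^ 3 * lam ph) +
        (betaX (x1, x2) : ℝ) * (1 + 12 * lam ph) ^ (2 * (x1 + x2 + 2)))) ^
    (1 / (2 * ((x2 : ℝ) - (x1 : ℝ))))

/-!
If `A` is the open cluster of `x`, the vertices joined to a point far away by lattice paths
avoiding `A` form an infinite region `O`, and the edges with exactly one endpoint in `O` form a
contour: deleting them leaves exactly the two components `O` and `ℤ² ∖ O ⊇ A`, and restoring any
one of them reconnects the plane. Each such edge has an endpoint in `A`, so it lies in `E_N`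
(as `A` avoids `∂V_N`) and is closed (as `A` is a cluster). Conversely, the open cluster of `x`
lies in the finite interior of a contour of closed edges of `E_N`; that interior cannot meet
`∂V_N`, since every vertex of `∂V_N` has a neighbour outside `V_N` across an edge not in `E_N`.
-/

open SimpleGraph

lemma LatticeEdge.fst_ne_snd (e : LatticeEdge) : e.fst ≠ e.snd := by
  unfold LatticeEdge.fst LatticeEdge.snd
  cases e.horiz <;> simp [Prod.ext_iff]

lemma graphOf_adj_iff {S : Set LatticeEdge} {u v : ℤ × ℤ} :
    (graphOf S).Adj u v ↔ ∃ e ∈ S, (e.fst = u ∧ e.snd = v) ∨ (e.fst = v ∧ e.snd = u) := by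
  refine ⟨fun ⟨_, e, he, hs⟩ => ⟨e, he, Sym2.eq_iff.1 hs⟩,
    fun ⟨e, he, h⟩ => ⟨?_, e, he, Sym2.eq_iff.2 h⟩⟩
  rcases h with ⟨rfl, rfl⟩ | ⟨rfl, rfl⟩
  exacts [e.fst_ne_snd, e.fst_ne_snd.symm]

lemma graphOf_adj_of_mem {S : Set LatticeEdge} {e : LatticeEdge} (he : e ∈ S) :
    (graphOf S).Adj e.fst e.snd :=
  graphOf_adj_iff.2 ⟨e, he, .inl ⟨rfl, rfl⟩⟩

lemma graphOf_mono {S T : Set LatticeEdge} (h : S ⊆ T) : graphOf S ≤ graphOf T :=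
  fun _ _ ⟨hne, e, he, hs⟩ => ⟨hne, e, h he, hs⟩

lemma SimpleGraph.Reachable.mem_iff_mem {V : Type*} {G : SimpleGraph V} {P : Set V}
    (hP : ∀ u v, G.Adj u v → (u ∈ P ↔ v ∈ P)) {u v : V} (h : G.Reachable u v) :
    u ∈ P ↔ v ∈ P := by
  obtain ⟨W⟩ := h
  induction W with
  | nil => rfl
  | cons hadj _ ih => exact (hP _ _ hadj).trans ih

lemma SimpleGraph.supp_connectedComponentMk_eq {V : Type*} {G : SimpleGraph V} {P : Set V}
    (hP : ∀ u v, G.Adj u v → (u ∈ P ↔ v ∈ P)) {a : V} (ha : a ∈ P)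
    (hreach : ∀ v ∈ P, G.Reachable v a) : (G.connectedComponentMk a).supp = P := by
  ext v
  simp only [ConnectedComponent.mem_supp_iff, ConnectedComponent.eq]
  exact ⟨fun h => (h.mem_iff_mem hP).2 ha, hreach v⟩

lemma graphOf_setOf_adj_iff {P : ℤ × ℤ → ℤ × ℤ → Prop} (hP : ∀ u v, P u v → P v u)
    {u v : ℤ × ℤ} :
    (graphOf {e | P e.fst e.snd}).Adj u v ↔ (graphOf Set.univ).Adj u v ∧ P u v := by
  simp only [graphOf_adj_iff, Set.mem_univ, true_and, Set.mem_ofPred_eq]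
  constructor
  · rintro ⟨e, he, h⟩
    refine ⟨⟨e, h⟩, ?_⟩
    rcases h with ⟨rfl, rfl⟩ | ⟨rfl, rfl⟩
    exacts [he, hP _ _ he]
  · rintro ⟨⟨e, h⟩, huv⟩
    refine ⟨e, ?_, h⟩
    rcases h with ⟨rfl, rfl⟩ | ⟨rfl, rfl⟩
    exacts [huv, hP _ _ huv]

lemma graphOf_reachable_horiz {S : Set LatticeEdge} {y : ℤ}
    (hS : ∀ t : ℤ, (⟨(t, y), true⟩ : LatticeEdge) ∈ S) (a b : ℤ) :
    (graphOf S).Reachable (a, y) (b, y) := by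
  wlog hab : a ≤ b generalizing a b
  · exact (this b a (by omega)).symm
  induction b, hab using Int.leInduction with
  | base => rfl
  | succ b _ ih => exact ih.trans (graphOf_adj_of_mem (hS b)).reachable

lemma graphOf_reachable_vert {S : Set LatticeEdge} {x : ℤ}
    (hS : ∀ t : ℤ, (⟨(x, t), false⟩ : LatticeEdge) ∈ S) (a b : ℤ) :
    (graphOf S).Reachable (x, a) (x, b) := by
  wlog hab : a ≤ b generalizing a b
  · exact (this b a (by omega)).symm
  induction b, hab using Int.leInduction with
  | base => rfl
  | succ b _ ih => exact ih.trans (graphOf_adj_of_mem (hS b)).reachable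

lemma graphOf_univ_reachable (u v : ℤ × ℤ) : (graphOf Set.univ).Reachable u v :=
  (graphOf_reachable_horiz (fun _ => Set.mem_univ _) u.1 v.1).trans
    (graphOf_reachable_vert (fun _ => Set.mem_univ _) u.2 v.2)

lemma mem_VN_iff {N : ℕ} {v : ℤ × ℤ} :
    v ∈ VN N ↔ -(N : ℤ) ≤ v.1 ∧ v.1 ≤ N ∧ -(N : ℤ) ≤ v.2 ∧ v.2 ≤ N := by
  simp only [VN, Set.mem_ofPred_eq, abs_le, and_assoc]

lemma mem_VN_diff_intBdry_iff {N : ℕ} {v : ℤ × ℤ} :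
    v ∈ VN N \ intBdry N ↔ -(N : ℤ) < v.1 ∧ v.1 < N ∧ -(N : ℤ) < v.2 ∧ v.2 < N := by
  simp only [VN, intBdry, Set.mem_sdiff, Set.mem_ofPred_eq, abs_le,
    abs_eq (Nat.cast_nonneg (α := ℤ) N)]
  omega

lemma VN_finite (N : ℕ) : (VN N).Finite := by
  refine (Set.finite_Icc (-(N : ℤ), -(N : ℤ)) (N, N)).subset fun v hv => ?_
  simp only [mem_VN_iff] at hv
  simp only [Set.mem_Icc, Prod.le_def]
  omega

lemma finite_setOf_endpoint_mem_VN (N : ℕ) :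
    {e : LatticeEdge | e.fst ∈ VN N ∨ e.snd ∈ VN N}.Finite := by
  refine (((VN_finite (N + 1)).prod Set.finite_univ).image
    fun q : (ℤ × ℤ) × Bool => LatticeEdge.mk q.1 q.2).subset
      fun e he => ⟨(e.base, e.horiz), ⟨?_, trivial⟩, rfl⟩
  obtain ⟨⟨b1, b2⟩, h⟩ := e
  simp only [Set.mem_ofPred_eq, mem_VN_iff] at he ⊢
  cases h <;> simp [LatticeEdge.fst, LatticeEdge.snd] at he ⊢ <;> omega

section Box

variable {N : ℕ} {S : Set LatticeEdge}

lemma graphOf_reachable_corner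
    (hS : ∀ e : LatticeEdge, e.fst ∉ VN N → e.snd ∉ VN N → e ∈ S) {u : ℤ × ℤ} (hu : u ∉ VN N) :
    (graphOf S).Reachable u ((N : ℤ) + 1, (N : ℤ) + 1) := by
  have hrow : ∀ y : ℤ, y < -N ∨ N < y → ∀ a b : ℤ, (graphOf S).Reachable (a, y) (b, y) :=
    fun y hy => graphOf_reachable_horiz fun t => hS _
      (by simp [mem_VN_iff, LatticeEdge.fst]; omega)
      (by simp [mem_VN_iff, LatticeEdge.snd]; omega)
  have hcol : ∀ x : ℤ, x < -N ∨ N < x → ∀ a b : ℤ, (graphOf S).Reachable (x, a) (x, b) :=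
    fun x hx => graphOf_reachable_vert fun t => hS _
      (by simp [mem_VN_iff, LatticeEdge.fst]; omega)
      (by simp [mem_VN_iff, LatticeEdge.snd]; omega)
  rw [mem_VN_iff] at hu
  by_cases h : u.1 < -N ∨ N < u.1
  · exact (hcol u.1 h u.2 _).trans (hrow _ (by omega) _ _)
  · exact (hrow u.2 (by omega) u.1 _).trans (hcol _ (by omega) _ _)

lemma graphOf_reachable_of_notMem_VN
    (hS : ∀ e : LatticeEdge, e.fst ∉ VN N → e.snd ∉ VN N → e ∈ S)
    {u v : ℤ × ℤ} (hu : u ∉ VN N) (hv : v ∉ VN N) : (graphOf S).Reachable u v :=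
  (graphOf_reachable_corner hS hu).trans (graphOf_reachable_corner hS hv).symm

lemma exists_adj_notMem_VN_of_mem_intBdry
    (hS : ∀ e : LatticeEdge, ¬ edgeInBox N e → e ∈ S) {v : ℤ × ℤ} (hv : v ∈ intBdry N) :
    ∃ w ∉ VN N, (graphOf S).Adj v w := by
  have hv' : v ∈ VN N ∧ ¬ v ∈ VN N \ intBdry N := ⟨hv.1, fun h => h.2 hv⟩
  rw [mem_VN_diff_intBdry_iff, mem_VN_iff] at hv'
  obtain ⟨w, e, hw, hew⟩ : ∃ w : ℤ × ℤ, ∃ e : LatticeEdge, w ∉ VN N ∧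
      ((e.fst = v ∧ e.snd = w) ∨ (e.fst = w ∧ e.snd = v)) := by
    obtain h | h | h | h : v.1 = N ∨ v.1 = -N ∨ v.2 = N ∨ v.2 = -N := by omega
    · exact ⟨(v.1 + 1, v.2), ⟨v, true⟩, by simp [mem_VN_iff]; omega, .inl ⟨rfl, rfl⟩⟩
    · exact ⟨(v.1 - 1, v.2), ⟨(v.1 - 1, v.2), true⟩, by simp [mem_VN_iff]; omega,
        .inr ⟨rfl, by simp [LatticeEdge.snd]⟩⟩
    · exact ⟨(v.1, v.2 + 1), ⟨v, false⟩, by simp [mem_VN_iff]; omega, .inl ⟨rfl, rfl⟩⟩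
    · exact ⟨(v.1, v.2 - 1), ⟨(v.1, v.2 - 1), false⟩, by simp [mem_VN_iff]; omega,
        .inr ⟨rfl, by simp [LatticeEdge.snd]⟩⟩
  refine ⟨w, hw, graphOf_adj_iff.2 ⟨e, hS e fun he => hw ?_, hew⟩⟩
  rcases hew with ⟨-, rfl⟩ | ⟨rfl, -⟩
  exacts [he.2, he.1]

lemma edgeInBox_of_mem_interior {e : LatticeEdge}
    (he : e.fst ∈ VN N \ intBdry N ∨ e.snd ∈ VN N \ intBdry N) : edgeInBox N e := by
  obtain ⟨⟨b1, b2⟩, h⟩ := e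
  simp only [edgeInBox, mem_VN_diff_intBdry_iff, mem_VN_iff] at he ⊢
  cases h <;> simp only [LatticeEdge.fst, LatticeEdge.snd] at he ⊢ <;> simp at he ⊢ <;> omega

lemma supp_subset_VN_diff_intBdry_of_finite
    (hS : ∀ e : LatticeEdge, ¬ edgeInBox N e → e ∈ S) (C : (graphOf S).ConnectedComponent)
    (hC : C.supp.Finite) : C.supp ⊆ VN N \ intBdry N := by
  have hVN : C.supp ⊆ VN N := by
    intro v hv
    by_contra hvN
    refine (VN_finite N).infinite_compl (hC.subset fun u hu => ?_)
    exact (ConnectedComponent.sound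
      (graphOf_reachable_of_notMem_VN (fun e h _ => hS e (h ·.1)) hu hvN)).trans hv
  intro v hv
  refine ⟨hVN hv, fun hb => ?_⟩
  obtain ⟨w, hw, hadj⟩ := exists_adj_notMem_VN_of_mem_intBdry hS hb
  exact hw (hVN (C.mem_supp_of_adj_mem_supp hv hadj))

lemma supp_subset_VN_of_mem {ω : LatticeEdge → Bool}
    {C : (openGraphN N ω).ConnectedComponent} {x : ℤ × ℤ} (hxC : x ∈ C.supp)
    (hx : x ∈ VN N) : C.supp ⊆ VN N := fun v hv =>
  ((C.reachable_of_mem_supp hv hxC).mem_iff_mem fun u w h => by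
    obtain ⟨e, ⟨⟨h₁, h₂⟩, -⟩, ⟨rfl, rfl⟩ | ⟨rfl, rfl⟩⟩ := graphOf_adj_iff.1 h <;>
      exact iff_of_true ‹_› ‹_›).2 hx

end Box

def edgesAvoiding (A : Set (ℤ × ℤ)) : Set LatticeEdge := {e | e.fst ∉ A ∧ e.snd ∉ A}

def edgeBoundary (O : Set (ℤ × ℤ)) : Set LatticeEdge := {e | ¬(e.fst ∈ O ↔ e.snd ∈ O)}

lemma adj_edgesAvoiding_iff {A : Set (ℤ × ℤ)} {u v : ℤ × ℤ} :
    (graphOf (edgesAvoiding A)).Adj u v ↔ (graphOf Set.univ).Adj u v ∧ u ∉ A ∧ v ∉ A :=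
  graphOf_setOf_adj_iff (P := fun a b => a ∉ A ∧ b ∉ A) fun _ _ => And.symm

lemma adj_compl_edgeBoundary_iff {O : Set (ℤ × ℤ)} {u v : ℤ × ℤ} :
    (graphOf (edgeBoundary O)ᶜ).Adj u v ↔ (graphOf Set.univ).Adj u v ∧ (u ∈ O ↔ v ∈ O) :=
  (graphOf_setOf_adj_iff (P := fun a b => ¬¬(a ∈ O ↔ b ∈ O))
    fun _ _ h h' => h fun h'' => h' h''.symm).trans (and_congr_right' not_not)

lemma Surrounds.mono {γ : Finset LatticeEdge} {X Y : Set (ℤ × ℤ)} (h : Surrounds γ X)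
    (hYX : Y ⊆ X) : Surrounds γ Y :=
  let ⟨C, hC, hXC⟩ := h.2
  ⟨h.1, C, hC, hYX.trans hXC⟩

theorem surrounds_of_edgeBoundary {O X : Set (ℤ × ℤ)} (hfin : (edgeBoundary O).Finite)
    {p x : ℤ × ℤ} (hp : p ∈ O) (hx : x ∉ O)
    (hO : ∀ v ∈ O, (graphOf (edgeBoundary O)ᶜ).Reachable v p)
    (hOc : ∀ v ∉ O, (graphOf (edgeBoundary O)ᶜ).Reachable v x)
    (hOinf : O.Infinite) (hOcfin : Oᶜ.Finite) (hX : X ⊆ Oᶜ) :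
    Surrounds hfin.toFinset X := by
  set G := graphOf (edgeBoundary O)ᶜ
  have hG : complGraph hfin.toFinset = G := by
    simp only [complGraph, Set.Finite.mem_toFinset]; rfl
  have hP : ∀ u v, G.Adj u v → (u ∈ O ↔ v ∈ O) := fun _ _ h =>
    (adj_compl_edgeBoundary_iff.1 h).2
  have hsuppO : (G.connectedComponentMk p).supp = O := supp_connectedComponentMk_eq hP hp hO
  have hsuppOc : (G.connectedComponentMk x).supp = Oᶜ :=
    supp_connectedComponentMk_eq (fun u v h => not_congr (hP u v h)) hx hOc
  have hfinx : (G.connectedComponentMk x).supp.Finite := hsuppOc ▸ hOcfin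
  refine ⟨⟨?_, fun e he => ?_⟩, ?_⟩
  · rw [hG]
    refine ⟨G.connectedComponentMk x, hfinx, fun D => ?_⟩
    induction D using ConnectedComponent.ind with | h v => ?_
    intro hD
    by_cases hv : v ∈ O
    · rw [ConnectedComponent.sound (hO v hv), hsuppO] at hD
      exact absurd hD hOinf
    · exact ConnectedComponent.sound (hOc v hv)
  · -- restoring a boundary edge joins `x` to `p`, making the graph connected
    set G' := graphOf {f | f ∉ hfin.toFinset ∨ f = e}
    have hle : G ≤ G' := graphOf_mono fun f hf => .inl (by simpa using hf)
    have he' : ¬(e.fst ∈ O ↔ e.snd ∈ O) := by simpa [edgeBoundary] using he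
    have hadj : G'.Reachable e.fst e.snd := (graphOf_adj_of_mem (.inr rfl)).reachable
    have hxp : G'.Reachable x p := by
      by_cases h₁ : e.fst ∈ O
      · have h₂ : e.snd ∉ O := fun h₂ => he' (iff_of_true h₁ h₂)
        exact ((hOc _ h₂).mono hle).symm.trans (hadj.symm.trans ((hO _ h₁).mono hle))
      · have h₂ : e.snd ∈ O := by_contra fun h₂ => he' (iff_of_false h₁ h₂)
        exact ((hOc _ h₁).mono hle).symm.trans (hadj.trans ((hO _ h₂).mono hle))
    have hall : ∀ v, G'.Reachable v p := fun v =>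
      (em (v ∈ O)).elim (fun hv => (hO v hv).mono hle)
        fun hv => ((hOc v hv).mono hle).trans hxp
    intro D
    induction D using ConnectedComponent.ind with | h v => ?_
    exact fun hD => Set.infinite_univ (hD.subset fun u _ =>
      ConnectedComponent.sound ((hall u).trans (hall v).symm))
  · rw [hG]
    exact ⟨G.connectedComponentMk x, hfinx, hsuppOc ▸ hX⟩

/-- For `p` far from a finite `A`, the unbounded region cut out by `A`. -/
def outside (A : Set (ℤ × ℤ)) (p : ℤ × ℤ) : Set (ℤ × ℤ) :=
  {v | (graphOf (edgesAvoiding A)).Reachable v p}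

section Outside

variable {A : Set (ℤ × ℤ)} {p : ℤ × ℤ}

lemma notMem_of_mem_outside (hp : p ∉ A) {v : ℤ × ℤ} (hv : v ∈ outside A p) : v ∉ A :=
  ((hv : (graphOf (edgesAvoiding A)).Reachable v p).mem_iff_mem (P := Aᶜ)
    fun _ _ h => iff_of_true (adj_edgesAvoiding_iff.1 h).2.1
      (adj_edgesAvoiding_iff.1 h).2.2).2 hp

lemma edgesAvoiding_subset_compl_edgeBoundary_outside :
    edgesAvoiding A ⊆ (edgeBoundary (outside A p))ᶜ := fun e he hbd =>
  have hadj : (graphOf (edgesAvoiding A)).Adj e.fst e.snd := graphOf_adj_of_mem he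
  hbd ⟨hadj.symm.reachable.trans, hadj.reachable.trans⟩

lemma endpoint_mem_of_mem_edgeBoundary_outside {e : LatticeEdge}
    (he : e ∈ edgeBoundary (outside A p)) : e.fst ∈ A ∨ e.snd ∈ A := by
  by_contra! h
  exact edgesAvoiding_subset_compl_edgeBoundary_outside h he

lemma reachable_of_notMem_outside {x : ℤ × ℤ} (hp : p ∉ A)
    (hA : ∀ a ∈ A, (graphOf (edgeBoundary (outside A p))ᶜ).Reachable a x)
    {v : ℤ × ℤ} (hv : v ∉ outside A p) :
    (graphOf (edgeBoundary (outside A p))ᶜ).Reachable v x := by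
  have hvp := (reachable_iff_reflTransGen _ _).1 (graphOf_univ_reachable v p)
  induction hvp using Relation.ReflTransGen.head_induction_on with
  | refl => exact absurd (Reachable.refl _) hv
  | @head u w hadj _ ih =>
    by_cases hu : u ∈ A
    · exact hA u hu
    have hw : w ∉ outside A p := fun hw =>
      hv ((adj_edgesAvoiding_iff.2 ⟨hadj, hu, notMem_of_mem_outside hp hw⟩).reachable.trans hw)
    exact (adj_compl_edgeBoundary_iff.2 ⟨hadj, iff_of_false hv hw⟩).reachable.trans (ih hw)

end Outside

theorem exists_surrounds_supp {N : ℕ} {S : Set LatticeEdge}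
    (C : (graphOf S).ConnectedComponent) (hC : C.supp ⊆ VN N) :
    ∃ γ : Finset LatticeEdge, Surrounds γ C.supp ∧
      ∀ e ∈ γ, e ∉ S ∧ (e.fst ∈ C.supp ∨ e.snd ∈ C.supp) := by
  induction C using ConnectedComponent.ind with | h x => ?_
  set A := ((graphOf S).connectedComponentMk x).supp
  set p : ℤ × ℤ := ((N : ℤ) + 1, (N : ℤ) + 1)
  have hpN : p ∉ VN N := by simp [p, mem_VN_iff]
  have hpA : p ∉ A := fun h => hpN (hC h)
  set O := outside A p
  have hAO : ∀ v ∈ A, v ∉ O := fun v hv hvO => notMem_of_mem_outside hpA hvO hv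
  have hfin : (edgeBoundary O).Finite := (finite_setOf_endpoint_mem_VN N).subset fun e he =>
    (endpoint_mem_of_mem_edgeBoundary_outside he).imp (hC ·) (hC ·)
  have hnotS : ∀ e ∈ edgeBoundary O, e ∉ S := by
    intro e he heS
    have hA := ((graphOf S).connectedComponentMk x).mem_supp_congr_adj (graphOf_adj_of_mem heS)
    rcases endpoint_mem_of_mem_edgeBoundary_outside he with h | h
    · exact he (iff_of_false (hAO _ h) (hAO _ (hA.1 h)))
    · exact he (iff_of_false (hAO _ (hA.2 h)) (hAO _ h))
  have hle : graphOf S ≤ graphOf (edgeBoundary O)ᶜ :=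
    graphOf_mono fun e heS he => hnotS e he heS
  have hout : (VN N)ᶜ ⊆ O := fun v hv =>
    graphOf_reachable_of_notMem_VN (S := edgesAvoiding A)
      (fun _ h₁ h₂ => ⟨(h₁ <| hC ·), (h₂ <| hC ·)⟩) hv hpN
  refine ⟨hfin.toFinset, surrounds_of_edgeBoundary hfin (Reachable.refl p)
    (hAO x ConnectedComponent.connectedComponentMk_mem)
    (fun v hv => hv.mono (graphOf_mono edgesAvoiding_subset_compl_edgeBoundary_outside))
    (fun v hv => reachable_of_notMem_outside hpA
      (fun a ha => (ConnectedComponent.reachable_of_mem_supp _ ha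
        ConnectedComponent.connectedComponentMk_mem).mono hle) hv)
    ((VN_finite N).infinite_compl.mono hout)
    ((VN_finite N).subset (Set.compl_subset_comm.1 hout)) hAO, fun e he => ?_⟩
  rw [Set.Finite.mem_toFinset] at he
  exact ⟨hnotS e he, endpoint_mem_of_mem_edgeBoundary_outside he⟩

theorem finiteVolEvent_iff_contour_general (N : ℕ) (x y : ℤ × ℤ)
    (hx : x ∈ VN N \ intBdry N)
    (ω : LatticeEdge → Bool) :
    (∃ C : (openGraphN N ω).ConnectedComponent,
        x ∈ C.supp ∧ y ∈ C.supp ∧ C.supp ∩ intBdry N = ∅) ↔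
      ((openGraphN N ω).Reachable x y ∧
        ∃ γ : Finset LatticeEdge, Surrounds γ {x, y} ∧
          ∀ e ∈ γ, edgeInBox N e ∧ ω e = false) := by
  constructor
  · rintro ⟨C, hxC, hyC, hCbd⟩
    have hCin : C.supp ⊆ VN N \ intBdry N := fun v hv =>
      ⟨supp_subset_VN_of_mem hxC hx.1 hv, fun hb => hCbd.subset ⟨hv, hb⟩⟩
    obtain ⟨γ, hγ, hγC⟩ := exists_surrounds_supp C (hCin.trans Set.sdiff_subset)
    refine ⟨C.reachable_of_mem_supp hxC hyC, γ, hγ.mono (Set.pair_subset hxC hyC),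
      fun e he => ?_⟩
    have hbox := edgeInBox_of_mem_interior ((hγC e he).2.imp (hCin ·) (hCin ·))
    simpa [openGraphN, hbox] using (hγC e he).1
  · rintro ⟨hxy, γ, ⟨-, Cf, hCf, hxyCf⟩, hγ⟩
    have hle : openGraphN N ω ≤ complGraph γ :=
      graphOf_mono fun e he heγ => by simp [(hγ e heγ).2] at he
    have hsub := ConnectedComponent.connectedComponentMk_supp_subset_supp hle Cf
      (hxyCf (Set.mem_insert x _))
    have hCfin := supp_subset_VN_diff_intBdry_of_finite (fun e he heγ => he (hγ e heγ).1) Cf hCf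
    refine ⟨_, ConnectedComponent.connectedComponentMk_mem, ConnectedComponent.sound hxy.symm, ?_⟩
    exact Set.eq_empty_of_forall_notMem fun v ⟨hv, hb⟩ => (hCfin (hsub hv)).2 hb

/-- For `N ≥ 1`, `x, y ∈ V_N ∖ ∂_v^int V_N` and a configuration
`ω` on `E_N`, the following are equivalent: (i) there is an open cluster `A` of
`(V_N, {e ∈ E_N : ω(e) = 1})` with `{x,y} ⊆ V_A` and `V_A ∩ ∂_v^int V_N = ∅`;
(ii) `x` and `y` are joined by a path of open edges of `E_N`, and the set of closed
edges of `E_N` contains a contour surrounding `{x,y}`. -/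
theorem finiteVolEvent_iff_contour (N : ℕ) (hN : 1 ≤ N) (x y : ℤ × ℤ)
    (hx : x ∈ VN N \ intBdry N) (hy : y ∈ VN N \ intBdry N)
    (ω : LatticeEdge → Bool) :
    (∃ C : (openGraphN N ω).ConnectedComponent,
        x ∈ C.supp ∧ y ∈ C.supp ∧ C.supp ∩ intBdry N = ∅) ↔
      ((openGraphN N ω).Reachable x y ∧
        ∃ γ : Finset LatticeEdge, Surrounds γ {x, y} ∧
          ∀ e ∈ γ, edgeInBox N e ∧ ω e = false) :=
  finiteVolEvent_iff_contour_general N x y hx ω
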